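/- arXiv:1311.5007 — 6 statements merged into one kernel-verified Lean document; each statement's English description precedes it below -/
import Mathlib

section
/- Let (c_n) be the sequence of polynomials in ℚ[β] defined by c_0 = 2, c_1 = 1, and (n+1)·c_{n+1} = c_n + (β/4)·(n-1)·c_{n-1} for n ≥ 1. If β is specialized to 4, then for all n ≥ 1 one has c_{2n+1} = c_{2n} = (2n)!/(2^{2n}(n!)^2). -/
/-!
The closed form is `p n = centralBinom n / 4 ^ n`, which satisfies `(2n + 2) p (n + 1) = (2n + 1) p n`.
If `c (2m + 1) = p m` and `c (2m) = p m`, the recurrence at `2m + 1` gives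
`(2m + 2) c (2m + 2) = (2m + 1) p m`, so `c (2m + 2) = p (m + 1)`; at `2m + 2` it gives
`(2m + 3) c (2m + 3) = c (2m + 2) + (2m + 1) p m = (2m + 3) p (m + 1)`.
The induction carries `m * c (2m) = m * p m` rather than `c (2m) = p m`, so that it can start
from `c 1 = p 0` at `m = 0`.
-/

/-- The probability of exactly `n` heads in `2n` tosses of a fair coin. -/
def centralBinomProb (K : Type*) [Field K] (n : ℕ) : K := Nat.centralBinom n / 4 ^ n

variable {K : Type*} [Field K]

lemma centralBinomProb_zero : centralBinomProb K 0 = 1 := by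
  simp [centralBinomProb]

variable [CharZero K]

lemma centralBinomProb_eq_factorial_div (n : ℕ) :
    centralBinomProb K n = ((2 * n).factorial : K) / (2 ^ (2 * n) * (n.factorial : K) ^ 2) := by
  rw [centralBinomProb, Nat.centralBinom_eq_two_mul_choose, Nat.cast_choose K (by omega),
    show 2 * n - n = n by omega, pow_mul]
  ring

lemma two_mul_add_two_mul_centralBinomProb_succ (n : ℕ) :
    (2 * n + 2 : K) * centralBinomProb K (n + 1) = (2 * n + 1) * centralBinomProb K n := by
  have h := congrArg (Nat.cast (R := K)) (Nat.succ_mul_centralBinom_succ n)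
  push_cast at h
  simp only [centralBinomProb, pow_succ]
  field_simp
  linear_combination 2 * h

section Recurrence

variable {c : ℕ → K}
  (hrec : ∀ n : ℕ, 1 ≤ n → ((n : K) + 1) * c (n + 1) = c n + ((n : K) - 1) * c (n - 1))
include hrec

lemma recurrence_odd_even (m : ℕ) :
    c (2 * m + 1) = centralBinomProb K m ∧ (m : K) * c (2 * m) = m * centralBinomProb K m →
      c (2 * m + 3) = centralBinomProb K (m + 1) ∧
        ((m + 1 : ℕ) : K) * c (2 * m + 2) = (m + 1 : ℕ) * centralBinomProb K (m + 1) := by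
  rintro ⟨hodd, heven⟩
  have hp := two_mul_add_two_mul_centralBinomProb_succ (K := K) m
  have r1 := hrec (2 * m + 1) (by omega)
  have r2 := hrec (2 * m + 2) (by omega)
  rw [show 2 * m + 1 + 1 = 2 * m + 2 by omega, show 2 * m + 1 - 1 = 2 * m by omega] at r1
  rw [show 2 * m + 2 + 1 = 2 * m + 3 by omega, show 2 * m + 2 - 1 = 2 * m + 1 by omega] at r2
  push_cast at r1 r2 ⊢
  have hc2 : c (2 * m + 2) = centralBinomProb K (m + 1) := by
    refine mul_left_cancel₀ (show (2 * m + 2 : K) ≠ 0 by norm_cast) ?_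
    linear_combination r1 + hodd + 2 * heven - hp
  refine ⟨mul_left_cancel₀ (show (2 * m + 3 : K) ≠ 0 by norm_cast) ?_, by rw [hc2]⟩
  linear_combination r2 + hc2 + (2 * m + 1) * hodd - hp

lemma recurrence_eq_centralBinomProb (h1 : c 1 = 1) (m : ℕ) :
    c (2 * m + 1) = centralBinomProb K m ∧ (m : K) * c (2 * m) = m * centralBinomProb K m := by
  induction m with
  | zero => simp [h1, centralBinomProb_zero]
  | succ m ih => exact recurrence_odd_even hrec m ih

end Recurrence

theorem stmt_1_general (c : ℕ → ℚ) (h1 : c 1 = 1)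
    (hrec : ∀ n : ℕ, 1 ≤ n → ((n : ℚ) + 1) * c (n + 1) = c n + ((n : ℚ) - 1) * c (n - 1)) :
    ∀ n : ℕ, 1 ≤ n →
      c (2 * n + 1) = ((2 * n).factorial : ℚ) / (2 ^ (2 * n) * ((n.factorial : ℚ)) ^ 2) ∧
      c (2 * n) = ((2 * n).factorial : ℚ) / (2 ^ (2 * n) * ((n.factorial : ℚ)) ^ 2) := by
  intro n hn
  obtain ⟨hodd, heven⟩ := recurrence_eq_centralBinomProb hrec h1 n
  rw [← centralBinomProb_eq_factorial_div]
  exact ⟨hodd, mul_left_cancel₀ (by positivity) heven⟩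

theorem stmt_1 (c : ℕ → ℚ) (h0 : c 0 = 2) (h1 : c 1 = 1)
    (hrec : ∀ n : ℕ, 1 ≤ n → ((n : ℚ) + 1) * c (n + 1) = c n + ((n : ℚ) - 1) * c (n - 1)) :
    ∀ n : ℕ, 1 ≤ n →
      c (2 * n + 1) = ((2 * n).factorial : ℚ) / (2 ^ (2 * n) * ((n.factorial : ℚ)) ^ 2) ∧
      c (2 * n) = ((2 * n).factorial : ℚ) / (2 ^ (2 * n) * ((n.factorial : ℚ)) ^ 2) :=
  stmt_1_general c h1 hrec
end

section
/- Let (c_n) be the sequence in ℚ[β] defined by c_0 = 2, c_1 = 1, and (n+1)c_{n+1} = c_n + (β/4)(n-1)c_{n-1} for n ≥ 1. Then for every n ≥ 1, the degree of c_n as a polynomial in β is at most ⌊(n-1)/2⌋. -/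
/-!
Dividing the recurrence by `n + 1`, the degree of `c (n + 1)` is at most the larger of `deg c n`
and `deg c (n - 1) + 1`. The bound `⌊(n - 1) / 2⌋` grows by one every two steps, so it absorbs
both terms; the only exception would be `n = 1`, where the factor `(n - 1) / 4` kills the second term.
-/

open Polynomial

namespace Polynomial

variable {R : Type*} [Semiring R] [NoZeroDivisors R]

theorem degree_le_of_C_mul_eq_add_C_mul_X_mul {a b : R} {p q r : R[X]} (ha : a ≠ 0)
    (h : C a * r = p + C b * X * q) : r.degree ≤ max p.degree (q.degree + 1) := by
  rw [← degree_C_mul (p := r) ha, h]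
  refine (degree_add_le _ _).trans (max_le_max le_rfl ?_)
  calc (C b * X * q).degree ≤ (C b * X).degree + q.degree := degree_mul_le _ _
    _ ≤ 1 + q.degree := by
        gcongr
        exact (degree_mul_le _ _).trans (by simpa using add_le_add degree_C_le degree_X_le)
    _ = q.degree + 1 := add_comm _ _

theorem degree_le_half_of_C_mul_eq_add_C_mul_X_mul {c : ℕ → R[X]} {a b : ℕ → R}
    (ha : ∀ n, 1 ≤ n → a n ≠ 0) (hb : b 1 = 0) (hc : (c 1).degree ≤ 0)
    (hrec : ∀ n, 1 ≤ n → C (a n) * c (n + 1) = c n + C (b n) * X * c (n - 1)) :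
    ∀ n, 1 ≤ n → (c n).degree ≤ (((n - 1) / 2 : ℕ) : WithBot ℕ) := by
  intro n
  induction n using Nat.strong_induction_on with
  | _ n ih =>
    intro hn
    match n, hn with
    | 1, _ => simpa using hc
    | 2, _ =>
      rw [← degree_C_mul (ha 1 le_rfl), hrec 1 le_rfl, hb]
      simpa using hc
    | m + 3, _ =>
      have hstep := degree_le_of_C_mul_eq_add_C_mul_X_mul (ha (m + 2) (by omega))
        (hrec (m + 2) (by omega))
      refine hstep.trans (max_le ((ih (m + 2) (by omega) (by omega)).trans ?_) ?_)
      · exact_mod_cast Nat.div_le_div_right (by omega)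
      · calc (c (m + 2 - 1)).degree + 1 ≤ ((m / 2 : ℕ) : WithBot ℕ) + 1 := by
              gcongr; exact ih (m + 1) (by omega) (by omega)
          _ ≤ (((m + 3 - 1) / 2 : ℕ) : WithBot ℕ) := by norm_cast; omega

end Polynomial

theorem stmt_2_general (c : ℕ → Polynomial ℚ) (h1 : c 1 = 1)
    (hrec : ∀ n : ℕ, 1 ≤ n →
      C ((n : ℚ) + 1) * c (n + 1) = c n + C (((n : ℚ) - 1) / 4) * X * c (n - 1)) :
    ∀ n : ℕ, 1 ≤ n → (c n).degree ≤ (((n - 1) / 2 : ℕ) : WithBot ℕ) :=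
  degree_le_half_of_C_mul_eq_add_C_mul_X_mul (fun n _ => by positivity) (by norm_num)
    (by simp [h1]) hrec

theorem stmt_2 (c : ℕ → Polynomial ℚ) (h0 : c 0 = C 2) (h1 : c 1 = 1)
    (hrec : ∀ n : ℕ, 1 ≤ n →
      C ((n : ℚ) + 1) * c (n + 1) = c n + C (((n : ℚ) - 1) / 4) * X * c (n - 1)) :
    ∀ n : ℕ, 1 ≤ n → (c n).degree ≤ (((n - 1) / 2 : ℕ) : WithBot ℕ) :=
  stmt_2_general c h1 hrec
end

section
/- Fix an integer i ≥ 1 and set β = 1/i². Let (c_n) be defined by c_0 = 2, c_1 = 1, and (n+1)c_{n+1} = c_n + (β/4)(n-1)c_{n-1} for n ≥ 1. Then there exist rational numbers a_0, …, a_{i-1} such that for all n ≥ 1, c_n = (1/(2i)^n)·(a_0 + a_1 n + ⋯ + a_{i-1} n^{i-1}). -/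
/-!
Scaling `u n = (2i)^n c n` turns the recurrence into `(n+1) u(n+1) = 2i u(n) + (n-1) u(n-1)`, in
which `u 1` alone determines `u n` for all `n ≥ 1`. On polynomials, the operator
`P ↦ (X+1) P(X+1) - (X-1) P(X-1) - 2i P` maps degree `< i` to degree `< i - 1`, because the
coefficient of `X^(i-1)` cancels; by dimension count it has a nonzero kernel element `P`. The values
`P(n)` solve the same recurrence, so `P(1) ≠ 0` (otherwise `P` vanishes at every positive
integer), and after rescaling to `P(1) = u 1` we get `u n = P(n)` for all `n ≥ 1`.
-/

open Polynomial

section CommRing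

variable {R : Type*} [CommRing R]

noncomputable def recurrenceOp (t : R) : R[X] →ₗ[R] R[X] where
  toFun P := (X + 1) * P.comp (X + 1) - (X - 1) * P.comp (X - 1) - C t * P
  map_add' P Q := by simp only [add_comp]; ring
  map_smul' a P := by simp only [smul_eq_C_mul, mul_comp, C_comp, RingHom.id_apply]; ring

lemma recurrenceOp_apply (t : R) (P : R[X]) :
    recurrenceOp t P = (X + 1) * P.comp (X + 1) - (X - 1) * P.comp (X - 1) - C t * P :=
  rfl

lemma coeff_recurrenceOp_X_pow (t : R) {j k : ℕ} (hjk : j ≤ k) :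
    (recurrenceOp t (X ^ j)).coeff k = if k = j then 2 * ((j + 1 : ℕ) : R) - t else 0 := by
  have hX : (X - 1 : R[X]) = X + C (-1) := by rw [C_neg, C_1, sub_eq_add_neg]
  rw [recurrenceOp_apply, X_pow_comp, X_pow_comp, ← pow_succ', ← pow_succ', hX, coeff_sub,
    coeff_sub, coeff_X_add_one_pow, coeff_X_add_C_pow, coeff_C_mul_X_pow]
  obtain rfl | rfl | hlt : k = j ∨ k = j + 1 ∨ j + 1 < k := by omega
  · simp only [Nat.choose_succ_self_right, add_tsub_cancel_left, pow_one]
    push_cast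
    ring
  · simp
  · simp [Nat.choose_eq_zero_of_lt hlt, (Nat.lt_of_succ_lt hlt).ne']

lemma recurrenceOp_mem_degreeLT {d : ℕ} {P : R[X]} (hP : P ∈ degreeLT R (d + 1)) :
    recurrenceOp (2 * ((d + 1 : ℕ) : R)) P ∈ degreeLT R d := by
  classical
  suffices degreeLT R (d + 1) ≤ (degreeLT R d).comap (recurrenceOp (2 * ((d + 1 : ℕ) : R))) from
    this hP
  rw [degreeLT_eq_span_X_pow, Submodule.span_le, Finset.coe_image, Set.image_subset_iff]
  intro j hj
  have hjd : j ≤ d := Nat.lt_succ_iff.mp (Finset.mem_range.mp hj)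
  simp only [Set.mem_preimage, SetLike.mem_coe, Submodule.mem_comap, mem_degreeLT,
    degree_lt_iff_coeff_zero]
  intro k hk
  -- the only coefficient that could survive is that of `X ^ d` in the image of `X ^ d`
  rw [coeff_recurrenceOp_X_pow _ (hjd.trans hk)]
  split_ifs with hkj
  · obtain rfl : j = d := by omega
    ring
  · rfl

end CommRing

section Field

variable {K : Type*} [Field K]

lemma exists_ne_zero_mem_degreeLT_recurrenceOp_eq_zero (d : ℕ) :
    ∃ P ∈ degreeLT K (d + 1), P ≠ 0 ∧ recurrenceOp (2 * ((d + 1 : ℕ) : K)) P = 0 := by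
  let f := (recurrenceOp (2 * ((d + 1 : ℕ) : K))).restrict fun _ ↦ recurrenceOp_mem_degreeLT
  have hker : LinearMap.ker f ≠ ⊥ := LinearMap.ker_ne_bot_of_finrank_lt <| by
    simp only [Module.finrank_eq_card_basis (degreeLT.basis K _), Fintype.card_fin,
      Nat.lt_succ_self]
  obtain ⟨⟨P, hP⟩, hPker, hP0⟩ := (Submodule.ne_bot_iff _).mp hker
  refine ⟨P, hP, fun h ↦ hP0 (Subtype.ext h), ?_⟩
  simpa [f, Subtype.ext_iff] using hPker

def SolvesRecurrence (t : K) (u : ℕ → K) : Prop :=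
  ∀ n : ℕ, 1 ≤ n → ((n : K) + 1) * u (n + 1) = t * u n + ((n : K) - 1) * u (n - 1)

lemma solvesRecurrence_eval {t : K} {P : K[X]} (hP : recurrenceOp t P = 0) :
    SolvesRecurrence t fun n ↦ P.eval (n : K) := by
  intro n hn
  have := congrArg (eval (n : K)) hP
  simp only [recurrenceOp_apply, eval_sub, eval_mul, eval_add, eval_comp, eval_C, eval_X,
    eval_one, eval_zero] at this
  push_cast [Nat.cast_sub hn]
  linear_combination this

variable [CharZero K]

lemma SolvesRecurrence.eq_of_apply_one_eq {t : K} {u v : ℕ → K} (hu : SolvesRecurrence t u)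
    (hv : SolvesRecurrence t v) (h1 : u 1 = v 1) : ∀ n, 1 ≤ n → u n = v n := by
  suffices h : ∀ n : ℕ, (n : K) * u n = n * v n from
    fun n hn ↦ mul_left_cancel₀ (by exact_mod_cast (by omega : n ≠ 0)) (h n)
  refine Nat.twoStepInduction (by simp) (by simpa using h1) fun n hn hn1 ↦ ?_
  have hn1' : u (n + 1) = v (n + 1) :=
    mul_left_cancel₀ (Nat.cast_add_one_ne_zero n) (by exact_mod_cast hn1)
  have hu' := hu (n + 1) (by omega)
  have hv' := hv (n + 1) (by omega)
  push_cast at hu' hv' ⊢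
  simp only [add_sub_cancel_right] at hu' hv'
  linear_combination hu' - hv' + t * hn1' + hn

lemma eval_one_ne_zero_of_recurrenceOp_eq_zero {t : K} {P : K[X]} (hP0 : P ≠ 0)
    (hP : recurrenceOp t P = 0) : P.eval 1 ≠ 0 := by
  intro h1
  have hzero : ∀ n : ℕ, 1 ≤ n → P.eval (n : K) = 0 :=
    (solvesRecurrence_eval hP).eq_of_apply_one_eq (v := 0) (fun _ _ ↦ by simp) (by simpa using h1)
  refine hP0 (P.eq_zero_of_infinite_isRoot ?_)
  exact Set.infinite_of_injective_forall_mem (f := fun n : ℕ ↦ ((n + 1 : ℕ) : K))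
    (fun a b h ↦ by simpa using h) fun n ↦ hzero (n + 1) n.succ_pos

lemma exists_mem_degreeLT_recurrenceOp_eq_zero_eval_one_eq (d : ℕ) (a : K) :
    ∃ P ∈ degreeLT K (d + 1), recurrenceOp (2 * ((d + 1 : ℕ) : K)) P = 0 ∧ P.eval 1 = a := by
  obtain ⟨P, hPdeg, hP0, hP⟩ := exists_ne_zero_mem_degreeLT_recurrenceOp_eq_zero (K := K) d
  refine ⟨(a / P.eval 1) • P, Submodule.smul_mem _ _ hPdeg, by rw [map_smul, hP, smul_zero], ?_⟩
  rw [eval_smul, smul_eq_mul, div_mul_cancel₀ _ (eval_one_ne_zero_of_recurrenceOp_eq_zero hP0 hP)]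

lemma solvesRecurrence_pow_mul {t : K} (ht : t ≠ 0) {c : ℕ → K}
    (hrec : ∀ n : ℕ, 1 ≤ n →
      ((n : K) + 1) * c (n + 1) = c n + (1 / t ^ 2) * ((n : K) - 1) * c (n - 1)) :
    SolvesRecurrence t fun n ↦ t ^ n * c n := by
  rintro (_ | m) hm
  · omega
  have hinv : t ^ 2 * (1 / t ^ 2) = 1 := mul_one_div_cancel (pow_ne_zero 2 ht)
  have := hrec (m + 1) hm
  simp only [Nat.add_sub_cancel] at this ⊢
  push_cast at this ⊢
  linear_combination t ^ (m + 2) * this + (m * t ^ m * c m) * hinv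

end Field

theorem stmt_3_general (i : ℕ) (hi : 1 ≤ i) (c : ℕ → ℚ) (h1 : c 1 = 1)
    (hrec : ∀ n : ℕ, 1 ≤ n →
      ((n : ℚ) + 1) * c (n + 1) = c n + (1 / (4 * (i : ℚ) ^ 2)) * ((n : ℚ) - 1) * c (n - 1)) :
    ∃ a : Fin i → ℚ, ∀ n : ℕ, 1 ≤ n →
      c n = (1 / (2 * (i : ℚ)) ^ n) * ∑ j : Fin i, a j * (n : ℚ) ^ (j : ℕ) := by
  obtain ⟨d, rfl⟩ : ∃ d, i = d + 1 := ⟨i - 1, by omega⟩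
  set t : ℚ := 2 * ((d + 1 : ℕ) : ℚ) with ht
  have ht0 : t ≠ 0 := by positivity
  have hu : SolvesRecurrence t fun n ↦ t ^ n * c n := by
    refine solvesRecurrence_pow_mul ht0 fun n hn ↦ ?_
    rw [hrec n hn, ht]
    ring
  obtain ⟨P, hPdeg, hP, hP1⟩ := exists_mem_degreeLT_recurrenceOp_eq_zero_eval_one_eq d t
  refine ⟨degreeLTEquiv ℚ (d + 1) ⟨P, hPdeg⟩, fun n hn ↦ ?_⟩
  rw [← eval_eq_sum_degreeLTEquiv,
    ← hu.eq_of_apply_one_eq (solvesRecurrence_eval hP) (by simp [hP1, h1]) n hn]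
  field_simp

theorem stmt_3 (i : ℕ) (hi : 1 ≤ i) (c : ℕ → ℚ) (h0 : c 0 = 2) (h1 : c 1 = 1)
    (hrec : ∀ n : ℕ, 1 ≤ n →
      ((n : ℚ) + 1) * c (n + 1) = c n + (1 / (4 * (i : ℚ) ^ 2)) * ((n : ℚ) - 1) * c (n - 1)) :
    ∃ a : Fin i → ℚ, ∀ n : ℕ, 1 ≤ n →
      c n = (1 / (2 * (i : ℚ)) ^ n) * ∑ j : Fin i, a j * (n : ℚ) ^ (j : ℕ) :=
  stmt_3_general i hi c h1 hrec
end

section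
/- In a commutative ring, suppose elements h, α, β satisfy h² = αh − (α² − β)/4 (with 2 invertible). Then for every integer r ≥ 1, h^r = (1/2^r)·( Σ_{i even, 0 ≤ i ≤ r} α^{r-i} β^{i/2} C(r,i) + (2h − α)·Σ_{i odd, 1 ≤ i ≤ r} α^{r-i} β^{(i-1)/2} C(r,i) ). -/
/-!
With `x = 2h - α` the relation says exactly `x² = β`. Hence `(2h)^r = (α + x)^r`, and in the
binomial expansion of `(α + x)^r` the even powers of `x` are powers of `β` while the odd ones are
`x` times powers of `β`. Dividing by `2^r` gives the formula.
-/

open Finset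

section SquareRoot

variable {R : Type*} [CommSemiring R] {x β : R}

lemma pow_eq_pow_div_two_of_sq_eq (hx : x ^ 2 = β) {i : ℕ} (hi : Even i) :
    x ^ i = β ^ (i / 2) := by
  rw [← hx, ← pow_mul, Nat.two_mul_div_two_of_even hi]

lemma pow_eq_mul_pow_div_two_of_sq_eq (hx : x ^ 2 = β) {i : ℕ} (hi : Odd i) :
    x ^ i = x * β ^ ((i - 1) / 2) := by
  obtain ⟨k, rfl⟩ := hi
  rw [← hx, ← pow_mul, ← pow_succ']
  congr 1
  omega

theorem add_pow_eq_of_sq_eq (hx : x ^ 2 = β) (a : R) (n : ℕ) :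
    (a + x) ^ n =
      ∑ i ∈ (range (n + 1)).filter Even, (n.choose i : R) * a ^ (n - i) * β ^ (i / 2) +
        x * ∑ i ∈ (range (n + 1)).filter Odd,
          (n.choose i : R) * a ^ (n - i) * β ^ ((i - 1) / 2) := by
  rw [add_comm, add_pow, ← sum_filter_add_sum_filter_not _ Even, mul_sum]
  simp_rw [Nat.not_even_iff_odd]
  congr 1 <;> refine sum_congr rfl fun i hi => ?_
  · rw [pow_eq_pow_div_two_of_sq_eq hx (mem_filter.1 hi).2]
    ring
  · rw [pow_eq_mul_pow_div_two_of_sq_eq hx (mem_filter.1 hi).2]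
    ring

end SquareRoot

lemma pow_eq_one_div_two_pow_smul_two_mul_pow {K A : Type*} [Field K] [CharZero K] [CommSemiring A]
    [Algebra K A] (h : A) (r : ℕ) : h ^ r = ((1 : K) / 2 ^ r) • (2 * h) ^ r := by
  rw [mul_pow, Algebra.smul_def, ← mul_assoc, ← map_ofNat (algebraMap K A), ← map_pow, ← map_mul,
    one_div_mul_cancel (pow_ne_zero _ two_ne_zero), map_one, one_mul]

theorem stmt_4 (A : Type*) [CommRing A] [Algebra ℚ A] (h α β : A)
    (hrel : 4 * h ^ 2 = 4 * (α * h) - α ^ 2 + β) :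
    ∀ r : ℕ, 1 ≤ r →
      h ^ r = ((1 : ℚ) / 2 ^ r) •
        ((∑ i ∈ (Finset.range (r + 1)).filter (fun i => Even i),
            (r.choose i : A) * α ^ (r - i) * β ^ (i / 2)) +
         (2 * h - α) *
          ∑ i ∈ (Finset.range (r + 1)).filter (fun i => Odd i),
            (r.choose i : A) * α ^ (r - i) * β ^ ((i - 1) / 2)) := by
  intro r _
  have hx : (2 * h - α) ^ 2 = β := by linear_combination hrel
  rw [← add_pow_eq_of_sq_eq hx, add_sub_cancel]
  exact pow_eq_one_div_two_pow_smul_two_mul_pow h r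
end

section
/- Define the intersection number N(m,n,p;g) = (−1)^{g−p} · (g!·m!/((g−p)!·q!)) · 2^{2g−2−p} · (2^q − 2) · B_q, where q = m+p+1−g, B_q is the q-th Bernoulli number (with B_0 = 1 and B_q = 0 for q < 0), and m + 2n + 3p = 3g−3. If g is an odd prime, then N(m,n,p;g) ≡ −1 (mod g) when p = 0 and m ∈ {g−1, 2g−2, 3g−3}, and N(m,n,p;g) ≡ 0 (mod g) otherwise. -/
/-!
Write `N = c · B_q` with the integer `c = bernoulliCoeff g p q`. By von Staudt–Clausen,
`B_q = I - ∑ 1 / ℓ` with `I` an integer and `ℓ` running over the primes with `ℓ - 1 ∣ q`, and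
every such `ℓ` divides `c`: `2 ∣ 2 ^ q - 2`, and an odd `ℓ` divides `m! / q! = (q + 1) ⋯ m`
because `m - q ≥ q / 2`.
Hence `N = c I - ∑ c / ℓ` is an integer. For `q > 0` also `g ∣ c`, so modulo `g` only the term
`c / g` survives, and only when `g - 1 ∣ q`, i.e. `q = g - 1` or `q = 2g - 2`. There `g² ∣ c` unless
`p = 0`, and for `p = 0` Wilson's theorem gives `c / g ≡ 1`. For `q = 0`, `N = c`, which is
`≡ (g - 1)! ≡ -1` when `p = 0` and `≡ 0` otherwise (`g ∣ g! / (g - p)!`).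
-/

open Finset Nat

namespace Nat

theorem dvd_ascFactorial_of_dvd {d t n k : ℕ} (hd : d ∣ t) (hnt : n ≤ t) (htk : t < n + k) :
    d ∣ n.ascFactorial k := by
  have ht := dvd_prod_of_mem (fun i ↦ n + i) (mem_range.mpr (show t - n < k by omega))
  rw [Nat.add_sub_cancel' hnt] at ht
  exact ascFactorial_eq_prod_range n k ▸ hd.trans ht

theorem dvd_succ_ascFactorial_of_sub_one_dvd {ℓ q k : ℕ} (hℓ : 3 ≤ ℓ) (hdvd : (ℓ - 1) ∣ q)
    (hq : q ≠ 0) (hqk : q ≤ 2 * k) : ℓ ∣ (q + 1).ascFactorial k := by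
  obtain ⟨j, rfl⟩ := hdvd
  obtain ⟨l, rfl⟩ : ∃ l, ℓ = l + 1 := ⟨ℓ - 1, by omega⟩
  have hj : 0 < j := Nat.pos_of_ne_zero (right_ne_zero_of_mul hq)
  simp only [Nat.add_sub_cancel] at hqk ⊢
  -- the multiple `(l + 1) * j = l * j + j` lies in `(l * j, l * j + k]` as `2 * j ≤ l * j ≤ 2 * k`
  exact dvd_ascFactorial_of_dvd (dvd_mul_right (l + 1) j) (by nlinarith) (by nlinarith)

theorem dvd_succ_ascFactorial_sub_one {g q : ℕ} (hg : 0 < g) (hq : ¬ g ∣ q) :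
    g ∣ (q + 1).ascFactorial (g - 1) := by
  have hmod : q % g ≠ 0 := fun h ↦ hq (dvd_of_mod_eq_zero h)
  have := Nat.div_add_mod q g
  have := Nat.mod_lt q hg
  exact dvd_ascFactorial_of_dvd (dvd_mul_right g (q / g + 1)) (by rw [Nat.mul_succ]; omega)
    (by rw [Nat.mul_succ]; omega)

theorem dvd_iff_of_le_two_mul {d q : ℕ} (hq : q ≤ 2 * d) :
    d ∣ q ↔ q = 0 ∨ q = d ∨ q = 2 * d := by
  refine ⟨?_, by rintro (rfl | rfl | rfl) <;> simp⟩
  rintro ⟨j, rfl⟩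
  rcases Nat.eq_zero_or_pos d with rfl | hd
  · simp
  have : j ≤ 2 := le_of_mul_le_mul_left (by linarith) hd
  interval_cases j <;> simp [mul_comm]

theorem cast_succ_ascFactorial_of_cast_eq_zero {R : Type*} [CommSemiring R] {t : ℕ}
    (ht : (t : R) = 0) (k : ℕ) : ((t + 1).ascFactorial k : R) = k ! := by
  induction k with
  | zero => simp
  | succ k ih =>
    rw [ascFactorial_succ, factorial_succ]
    push_cast [ht, ih]
    ring

end Nat

namespace ZMod

variable {g : ℕ} [Fact g.Prime]

theorem factorial_sub_two_eq_one : ((g - 2)! : ZMod g) = 1 := by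
  have hg := (Fact.out : g.Prime).two_le
  have h := wilsons_lemma g
  rw [show g - 1 = (g - 2) + 1 by omega, factorial_succ, Nat.cast_mul,
    show g - 2 + 1 = g - 1 by omega, Nat.cast_sub (by omega), natCast_self] at h
  linear_combination -h

theorem two_mul_factorial_sub_three (hg : g ≠ 2) : 2 * ((g - 3)! : ZMod g) = -1 := by
  have hg3 : 3 ≤ g := by have := (Fact.out : g.Prime).two_le; omega
  have h := wilsons_lemma g
  rw [show g - 1 = (g - 3) + 1 + 1 by omega, factorial_succ, factorial_succ] at h
  push_cast [show g - 3 + 1 + 1 = g - 1 by omega, show g - 3 + 1 = g - 2 by omega,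
    Nat.cast_sub (show 1 ≤ g by omega), Nat.cast_sub (show 2 ≤ g by omega)] at h
  simp only [natCast_self] at h
  linear_combination h

theorem two_pow_eq_one_of_sub_one_dvd (hg : g ≠ 2) {k : ℕ} (hk : (g - 1) ∣ k) :
    (2 : ZMod g) ^ k = 1 := by
  obtain ⟨j, rfl⟩ := hk
  have h2 : (2 : ZMod g) ≠ 0 := by
    intro h
    have : g ∣ 2 := (natCast_eq_zero_iff 2 g).mp (by exact_mod_cast h)
    exact hg ((prime_dvd_prime_iff_eq Fact.out prime_two).mp this)
  rw [pow_mul, pow_card_sub_one_eq_one h2, one_pow]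

end ZMod

-- The finset of `Bernoulli.vonStaudt_clausen`; the bound `q + 2` only matters for `q = 0`.
def staudtPrimes (q : ℕ) : Finset ℕ := {ℓ ∈ range (q + 2) | ℓ.Prime ∧ (ℓ - 1) ∣ q}

theorem mem_staudtPrimes {q ℓ : ℕ} (hq : q ≠ 0) : ℓ ∈ staudtPrimes q ↔ ℓ.Prime ∧ (ℓ - 1) ∣ q := by
  simp only [staudtPrimes, mem_filter, mem_range, and_iff_right_iff_imp]
  rintro ⟨-, hdvd⟩
  have := Nat.le_of_dvd (Nat.pos_of_ne_zero hq) hdvd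
  omega

theorem intCast_mul_sub_sum_div {S : Finset ℕ} (hS : ∀ ℓ ∈ S, ℓ.Prime) {g : ℕ} (hg : g.Prime)
    {d : ℤ} (hdvd : ∀ ℓ ∈ S, (ℓ : ℤ) ∣ g * d) (I : ℤ) :
    ((g * d * I - ∑ ℓ ∈ S, g * d / ℓ : ℤ) : ZMod g) = if g ∈ S then -(d : ZMod g) else 0 := by
  have hterm : ∀ ℓ ∈ S, ((g * d / ℓ : ℤ) : ZMod g) = if ℓ = g then (d : ZMod g) else 0 := by
    intro ℓ hℓ
    split_ifs with h
    · rw [h, Int.mul_ediv_cancel_left _ (by exact_mod_cast hg.ne_zero)]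
    · obtain ⟨e, he⟩ := hdvd ℓ hℓ
      rw [he, Int.mul_ediv_cancel_left _ (by exact_mod_cast (hS ℓ hℓ).ne_zero),
        ZMod.intCast_zmod_eq_zero_iff_dvd]
      -- `g` divides `ℓ * e` but not the prime `ℓ ≠ g`
      refine ((Nat.prime_iff_prime_int.mp hg).dvd_or_dvd ⟨d, he.symm⟩).resolve_left ?_
      rw [Int.natCast_dvd_natCast, prime_dvd_prime_iff_eq hg (hS ℓ hℓ)]
      exact Ne.symm h
  push_cast
  rw [sum_congr rfl hterm, sum_ite_eq', ZMod.natCast_self]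
  split_ifs <;> ring

theorem exists_int_eq_mul_bernoulli {q : ℕ} (hq : q ≠ 0) (heven : Even q) {c : ℤ}
    (hc : ∀ ℓ ∈ staudtPrimes q, (ℓ : ℤ) ∣ c) :
    ∃ z : ℤ, c * bernoulli q = z ∧
      ∀ (g : ℕ) (d : ℤ), g.Prime → c = g * d →
        (z : ZMod g) = if (g - 1) ∣ q then -(d : ZMod g) else 0 := by
  obtain ⟨k, rfl⟩ := heven.two_dvd
  obtain ⟨I, hI⟩ := Bernoulli.vonStaudt_clausen k
  refine ⟨c * I - ∑ ℓ ∈ staudtPrimes (2 * k), c / ℓ, ?_, ?_⟩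
  · have hB : bernoulli (2 * k) = I - ∑ ℓ ∈ staudtPrimes (2 * k), (1 : ℚ) / ℓ := by
      rw [hI, staudtPrimes]; ring
    push_cast
    rw [hB, mul_sub, mul_sum]
    congr 1
    refine sum_congr rfl fun ℓ hℓ ↦ ?_
    have hℓ0 : (ℓ : ℚ) ≠ 0 := by exact_mod_cast ((mem_staudtPrimes hq).mp hℓ).1.ne_zero
    rw [Int.cast_div (hc ℓ hℓ) (by exact_mod_cast hℓ0)]
    push_cast
    ring
  · rintro g d hg rfl
    rw [intCast_mul_sub_sum_div (fun ℓ hℓ ↦ ((mem_staudtPrimes hq).mp hℓ).1) hg hc]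
    simp only [mem_staudtPrimes hq, hg, true_and]

-- With `m = q + (g - 1 - p)`, the two ascending factorials are `g! / (g - p)!` and `m! / q!`.
def bernoulliCoeff (g p q : ℕ) : ℤ :=
  (-1) ^ (g - p) * 2 ^ (2 * g - 2 - p) * (2 ^ q - 2) *
    (g - p + 1).ascFactorial p * (q + 1).ascFactorial (g - 1 - p)

theorem cast_bernoulliCoeff {g p : ℕ} (hp : p ≤ g) (q : ℕ) :
    (bernoulliCoeff g p q : ℚ) = (-1) ^ (g - p) * ((g ! * (q + (g - 1 - p))! : ℕ) : ℚ) /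
      (((g - p)! * q ! : ℕ) : ℚ) * 2 ^ (2 * g - 2 - p) * (2 ^ q - 2) := by
  have hg : (g - p)! * (g - p + 1).ascFactorial p = g ! := by
    rw [factorial_mul_ascFactorial, Nat.sub_add_cancel hp]
  rw [← hg, ← factorial_mul_ascFactorial q, bernoulliCoeff]
  have : ((g - p)! * q ! : ℚ) ≠ 0 := by positivity
  push_cast
  field_simp

section

variable {g : ℕ}

theorem dvd_sub_add_one_ascFactorial {p : ℕ} (hp0 : p ≠ 0) (hp : p ≤ g) :
    (g : ℤ) ∣ (g - p + 1).ascFactorial p :=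
  Int.natCast_dvd_natCast.mpr (dvd_ascFactorial_of_dvd dvd_rfl (by omega) (by omega))

theorem dvd_bernoulliCoeff_of_ne_zero {p : ℕ} (hp0 : p ≠ 0) (hp : p ≤ g) (q : ℕ) :
    (g : ℤ) ∣ bernoulliCoeff g p q :=
  ((dvd_sub_add_one_ascFactorial hp0 hp).mul_left _).mul_right _

theorem bernoulliCoeff_zero_right [Fact g.Prime] (hodd : Odd g) {p : ℕ} (hp : p ≤ g) :
    (bernoulliCoeff g p 0 : ZMod g) = if p = 0 then -1 else 0 := by
  split_ifs with hp0
  · subst hp0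
    have hg2 : g ≠ 2 := hodd.ne_two_of_dvd_nat dvd_rfl
    simp only [bernoulliCoeff, Nat.sub_zero, ascFactorial_zero, zero_add, one_ascFactorial,
      pow_zero]
    push_cast
    rw [hodd.neg_one_pow, ZMod.two_pow_eq_one_of_sub_one_dvd hg2 ⟨2, by omega⟩,
      ZMod.wilsons_lemma]
    ring
  · exact (ZMod.intCast_zmod_eq_zero_iff_dvd _ g).mpr (dvd_bernoulliCoeff_of_ne_zero hp0 hp 0)

theorem dvd_bernoulliCoeff_of_mem_staudtPrimes {p q ℓ : ℕ} (hq : q ≠ 0)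
    (hqp : q + 2 * p ≤ 2 * g - 2) (hℓ : ℓ ∈ staudtPrimes q) :
    (ℓ : ℤ) ∣ bernoulliCoeff g p q := by
  obtain ⟨hℓ, hdvd⟩ := (mem_staudtPrimes hq).mp hℓ
  rcases hℓ.eq_two_or_odd' with rfl | ⟨k, rfl⟩
  · rw [bernoulliCoeff]
    exact (((dvd_sub (dvd_pow_self (2 : ℤ) hq) dvd_rfl).mul_left _).mul_right _).mul_right _
  · have h3 : 3 ≤ 2 * k + 1 := by have := hℓ.two_le; omega
    exact (Int.natCast_dvd_natCast.mpr
      (dvd_succ_ascFactorial_of_sub_one_dvd h3 hdvd hq (by omega))).mul_left _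

theorem prime_dvd_bernoulliCoeff [hg : Fact g.Prime] (hodd : Odd g) {p q : ℕ} (hq : q ≠ 0)
    (heven : Even q) (hqp : q + 2 * p ≤ 2 * g - 2) : (g : ℤ) ∣ bernoulliCoeff g p q := by
  rcases eq_or_ne p 0 with rfl | hp0
  · have hgq : ¬ g ∣ q := by
      intro h
      have := Nat.le_of_dvd (Nat.pos_of_ne_zero hq)
        ((coprime_two_left.mpr hodd).mul_dvd_of_dvd_of_dvd heven.two_dvd h)
      omega
    exact (Int.natCast_dvd_natCast.mpr (dvd_succ_ascFactorial_sub_one hg.out.pos hgq)).mul_left _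
  · exact dvd_bernoulliCoeff_of_ne_zero hp0 (by omega) q

theorem sq_dvd_bernoulliCoeff {p : ℕ} (hp0 : p ≠ 0) (hp : 2 * p ≤ g - 1) :
    (g : ℤ) * g ∣ bernoulliCoeff g p (g - 1) := by
  have h2 : g ∣ (g - 1 + 1).ascFactorial (g - 1 - p) :=
    dvd_ascFactorial_of_dvd dvd_rfl (by omega) (by omega)
  exact mul_dvd_mul ((dvd_sub_add_one_ascFactorial hp0 (by omega)).mul_left _)
    (Int.natCast_dvd_natCast.mpr h2)

theorem exists_succ_ascFactorial_sub_one_eq_mul [Fact g.Prime] (hg2 : g ≠ 2) {q : ℕ}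
    (hq : q = g - 1 ∨ q = 2 * g - 2) :
    ∃ D : ℕ, (q + 1).ascFactorial (g - 1) = g * D ∧ (D : ZMod g) = 1 := by
  have hg3 : 3 ≤ g := by have := (Fact.out : g.Prime).two_le; omega
  rcases hq with rfl | rfl
  · refine ⟨(g + 1).ascFactorial (g - 2), ?_, ?_⟩
    · rw [Nat.sub_add_cancel (by omega), show g - 1 = 1 + (g - 2) by omega,
        ← ascFactorial_mul_ascFactorial]
      simp [ascFactorial_succ]
    · rw [cast_succ_ascFactorial_of_cast_eq_zero (ZMod.natCast_self g),
        ZMod.factorial_sub_two_eq_one]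
  · refine ⟨(2 * g - 1) * 2 * (2 * g + 1).ascFactorial (g - 3), ?_, ?_⟩
    · rw [show 2 * g - 2 + 1 = 2 * g - 1 by omega, show g - 1 = 2 + (g - 3) by omega,
        ← ascFactorial_mul_ascFactorial, show 2 * g - 1 + 2 = 2 * g + 1 by omega]
      simp only [ascFactorial_succ, ascFactorial_zero, show 2 * g - 1 + 1 = 2 * g by omega]
      ring
    · have h2g : ((2 * g : ℕ) : ZMod g) = 0 := by simp
      push_cast [Nat.cast_sub (show 1 ≤ 2 * g by omega),
        cast_succ_ascFactorial_of_cast_eq_zero h2g]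
      rw [ZMod.natCast_self]
      linear_combination -ZMod.two_mul_factorial_sub_three hg2

theorem exists_bernoulliCoeff_eq_mul [Fact g.Prime] (hodd : Odd g) {q : ℕ}
    (hq : q = g - 1 ∨ q = 2 * g - 2) :
    ∃ d : ℤ, bernoulliCoeff g 0 q = g * d ∧ (d : ZMod g) = 1 := by
  have hg2 : g ≠ 2 := hodd.ne_two_of_dvd_nat dvd_rfl
  obtain ⟨D, hD, hDmod⟩ := exists_succ_ascFactorial_sub_one_eq_mul hg2 hq
  refine ⟨(-1) ^ g * 2 ^ (2 * g - 2) * (2 ^ q - 2) * D, ?_, ?_⟩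
  · simp only [bernoulliCoeff, Nat.sub_zero, ascFactorial_zero, hD]
    push_cast
    ring
  · have h2q : (2 : ZMod g) ^ q = 1 := ZMod.two_pow_eq_one_of_sub_one_dvd hg2 <| by
      rcases hq with rfl | rfl
      exacts [dvd_rfl, ⟨2, by omega⟩]
    push_cast
    rw [hodd.neg_one_pow, ZMod.two_pow_eq_one_of_sub_one_dvd hg2 ⟨2, by omega⟩, h2q, hDmod]
    norm_num

end

theorem exists_int_eq_bernoulliCoeff_mul_bernoulli {g p q : ℕ} [hg : Fact g.Prime]
    (hodd : Odd g) (heven : Even q) (hqp : q + 2 * p ≤ 2 * g - 2) :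
    ∃ z : ℤ, (bernoulliCoeff g p q : ℚ) * bernoulli q = z ∧
      (z : ZMod g) = if p = 0 ∧ (g - 1) ∣ q then -1 else 0 := by
  rcases eq_or_ne q 0 with rfl | hq
  · refine ⟨_, by rw [bernoulli_zero, mul_one], ?_⟩
    rw [bernoulliCoeff_zero_right hodd (by omega)]
    simp
  obtain ⟨z, hz, hzmod⟩ := exists_int_eq_mul_bernoulli hq heven
    fun ℓ hℓ ↦ dvd_bernoulliCoeff_of_mem_staudtPrimes hq hqp hℓ
  refine ⟨z, hz, ?_⟩
  by_cases hdvd : (g - 1) ∣ q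
  · rcases eq_or_ne p 0 with rfl | hp0
    · have hq' : q = g - 1 ∨ q = 2 * g - 2 := by
        have := (dvd_iff_of_le_two_mul (by omega)).mp hdvd
        omega
      obtain ⟨d, hcd, hd⟩ := exists_bernoulliCoeff_eq_mul hodd hq'
      rw [hzmod g d hg.out hcd, if_pos hdvd, if_pos ⟨rfl, hdvd⟩, hd]
    · obtain rfl : q = g - 1 := by
        have := (dvd_iff_of_le_two_mul (by omega)).mp hdvd
        omega
      obtain ⟨e, he⟩ := sq_dvd_bernoulliCoeff (g := g) hp0 (by omega)
      rw [hzmod g (g * e) hg.out (by rw [he]; ring), if_pos hdvd, if_neg (by tauto)]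
      simp
  · obtain ⟨d, hd⟩ := prime_dvd_bernoulliCoeff hodd hq heven hqp
    rw [hzmod g d hg.out hd, if_neg hdvd, if_neg (by tauto)]

theorem stmt_11 (g m n p : ℕ) (hg : g.Prime) (hodd : Odd g)
    (hdim : m + 2 * n + 3 * p = 3 * g - 3) :
    ∃ z : ℤ,
      ((-1 : ℚ) ^ (g - p) *
        ((g.factorial * m.factorial : ℕ) : ℚ) /
          (((g - p).factorial * (((m + p + 1 : ℤ) - g).toNat).factorial : ℕ) : ℚ) *
        2 ^ (2 * g - 2 - p) * ((2 : ℚ) ^ ((m + p + 1 : ℤ) - g) - 2) *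
        (if ((m + p + 1 : ℤ) - g) < 0 then 0 else bernoulli ((m + p + 1 : ℤ) - g).toNat))
        = (z : ℚ) ∧
      ((z : ZMod g) =
        if p = 0 ∧ (m = g - 1 ∨ m = 2 * g - 2 ∨ m = 3 * g - 3) then -1 else 0) := by
  have : Fact g.Prime := ⟨hg⟩
  have hg2 := hg.two_le
  rcases lt_or_ge ((m + p + 1 : ℤ) - g) 0 with hneg | hnonneg
  · refine ⟨0, by simp [hneg], ?_⟩
    rw [if_neg (by omega)]
    simp
  obtain ⟨q, hq⟩ := Int.eq_ofNat_of_zero_le hnonneg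
  obtain rfl : m = q + (g - 1 - p) := by omega
  obtain ⟨z, hz, hzmod⟩ := exists_int_eq_bernoulliCoeff_mul_bernoulli (p := p) (q := q) hodd
    ⟨g - 1 - n - p, by omega⟩ (by omega)
  refine ⟨z, ?_, ?_⟩
  · rw [← hz, hq, if_neg (by omega), Int.toNat_natCast, zpow_natCast,
      cast_bernoulliCoeff (by omega)]
  · rw [hzmod]
    refine if_congr ?_ rfl rfl
    rw [dvd_iff_of_le_two_mul (by omega)]
    omega
end

section
/- Let m ≥ 1 and let p be an odd prime with p > 2m+1. The (m+1)×(m+1) Hankel-type determinant det( e_{m+j−i} )_{0 ≤ i,j ≤ m}, where e_n = C((p−1)/2, n) (with e_n = 0 for n < 0 or n > (p−1)/2), is not congruent to 0 modulo p. -/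
/-!
Modulo `p`, `k = (p - 1) / 2` is `-1/2`, so `C(k, n) ≡ (-4)⁻ⁿ C(2n, n)` for `n < p`. Reversing the
rows of the matrix and rescaling its rows and columns by powers of `-4` therefore turns it into the
Hankel matrix `(C(2(i + j), i + j))`, which factors as `L D Lᵀ` with `L = (C(2i, i + r))` lower
unitriangular and `D = diag(1, 2, …, 2)`. Its determinant `2ᵐ` is a unit modulo `p`.
-/

open Finset Matrix

namespace Nat

lemma sum_range_choose_mul_choose_sub_eq_sum_choose_add_succ {i m : ℕ} (j : ℕ) (hi : i ≤ m) :
    ∑ a ∈ range i, (2 * i).choose a * (2 * j).choose (i + j - a) =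
      ∑ r ∈ range m, (2 * i).choose (i + (r + 1)) * (2 * j).choose (j + (r + 1)) := by
  rw [← sum_range_reflect]
  have hterm : ∀ r ∈ range i, (2 * i).choose (i - 1 - r) * (2 * j).choose (i + j - (i - 1 - r)) =
      (2 * i).choose (i + (r + 1)) * (2 * j).choose (j + (r + 1)) := by
    intro r hr
    rw [mem_range] at hr
    rw [choose_symm_of_eq_add (show 2 * i = (i - 1 - r) + (i + (r + 1)) by omega),
      show i + j - (i - 1 - r) = j + (r + 1) by omega]
  rw [sum_congr rfl hterm]
  refine sum_subset (range_subset_range.mpr hi) fun r _ hr => ?_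
  rw [mem_range, not_lt] at hr
  rw [choose_eq_zero_of_lt (by omega : 2 * i < i + (r + 1)), zero_mul]

lemma sum_range_choose_add_mul_choose_sub_eq_sum_choose_add (i : ℕ) {j m : ℕ} (hj : j ≤ m) :
    ∑ r ∈ range (j + 1), (2 * i).choose (i + r) * (2 * j).choose (i + j - (i + r)) =
      ∑ r ∈ range (m + 1), (2 * i).choose (i + r) * (2 * j).choose (j + r) := by
  have hterm : ∀ r ∈ range (j + 1), (2 * i).choose (i + r) * (2 * j).choose (i + j - (i + r)) =
      (2 * i).choose (i + r) * (2 * j).choose (j + r) := by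
    intro r hr
    rw [mem_range] at hr
    rw [show i + j - (i + r) = j - r by omega,
      choose_symm_of_eq_add (show 2 * j = (j - r) + (j + r) by omega)]
  rw [sum_congr rfl hterm]
  refine sum_subset (range_subset_range.mpr (by omega)) fun r _ hr => ?_
  rw [mem_range, not_lt] at hr
  rw [choose_eq_zero_of_lt (by omega : 2 * j < j + r), mul_zero]

/-- Vandermonde's identity, with the summation index centred and folded by the symmetry
`C(2i, i - r) = C(2i, i + r)`. -/
theorem centralBinom_add_eq_sum {i j m : ℕ} (hi : i ≤ m) (hj : j ≤ m) :
    centralBinom (i + j) = ∑ r ∈ range (m + 1),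
      (if r = 0 then 1 else 2) * ((2 * i).choose (i + r) * (2 * j).choose (j + r)) := by
  set g : ℕ → ℕ := fun r => (2 * i).choose (i + r) * (2 * j).choose (j + r)
  have hvandermonde : centralBinom (i + j) =
      ∑ r ∈ range m, g (r + 1) + ∑ r ∈ range (m + 1), g r := by
    rw [centralBinom, mul_add, add_choose_eq, Nat.sum_antidiagonal_eq_sum_range_succ_mk,
      show (i + j).succ = i + (j + 1) by omega, sum_range_add,
      sum_range_choose_mul_choose_sub_eq_sum_choose_add_succ j hi,
      sum_range_choose_add_mul_choose_sub_eq_sum_choose_add i hj]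
  rw [hvandermonde, sum_range_succ', sum_range_succ' _ m]
  simp only [add_eq_zero, one_ne_zero, and_false, if_false, if_true, one_mul, two_mul,
    sum_add_distrib, g]
  ring

end Nat

section CentralBinomHankel

variable {R : Type*}

theorem det_mul_row_mul_column [CommRing R] {n : Type*} [Fintype n] [DecidableEq n]
    (u v : n → R) (A : Matrix n n R) :
    (of fun i j => u i * (v j * A i j)).det = (∏ i, u i) * (∏ j, v j) * A.det := by
  rw [mul_assoc, ← det_mul_row, ← det_mul_column]
  rfl

theorem centralBinom_hankel_eq_mul_diagonal_mul_transpose [CommSemiring R] (m : ℕ) :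
    (of fun i j : Fin (m + 1) => (Nat.centralBinom (i + j) : R)) =
      (of fun i r : Fin (m + 1) => ((2 * (i : ℕ)).choose (i + r) : R)) *
        diagonal (fun r : Fin (m + 1) => if (r : ℕ) = 0 then 1 else 2) *
        (of fun i r : Fin (m + 1) => ((2 * (i : ℕ)).choose (i + r) : R))ᵀ := by
  ext i j
  rw [of_apply, Nat.centralBinom_add_eq_sum i.is_le j.is_le, ← Fin.sum_univ_eq_sum_range,
    mul_apply]
  push_cast
  refine sum_congr rfl fun r _ => ?_
  simp only [mul_diagonal, transpose_apply, of_apply]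
  ring

theorem det_choose_two_mul_add [CommRing R] (m : ℕ) :
    (of fun i r : Fin (m + 1) => ((2 * (i : ℕ)).choose (i + r) : R)).det = 1 := by
  rw [det_of_isLowerTriangular]
  · exact prod_eq_one fun i _ => by simp [← two_mul]
  · intro i r hir
    rw [OrderDual.toDual_lt_toDual, Fin.lt_def] at hir
    rw [of_apply, Nat.choose_eq_zero_of_lt (by omega), Nat.cast_zero]

theorem det_centralBinom_hankel [CommRing R] (m : ℕ) :
    (of fun i j : Fin (m + 1) => (Nat.centralBinom (i + j) : R)).det = 2 ^ m := by
  rw [centralBinom_hankel_eq_mul_diagonal_mul_transpose, det_mul, det_mul, det_transpose,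
    det_choose_two_mul_add, det_diagonal, Fin.prod_univ_succ]
  simp

end CentralBinomHankel

theorem ZMod.centralBinom_eq_neg_four_pow_mul_choose {p k : ℕ} [Fact p.Prime]
    (hk : 2 * k + 1 = p) {n : ℕ} (hn : n < p) :
    (n.centralBinom : ZMod p) = (-4) ^ n * k.choose n := by
  induction n with
  | zero => simp
  | succ n ih =>
    have hk0 : ((2 * k + 1 : ℕ) : ZMod p) = 0 := by rw [hk, ZMod.natCast_self]
    have hn' : (n + 1 : ZMod p) ≠ 0 := by
      exact_mod_cast (ZMod.natCast_eq_zero_iff _ _).not.mpr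
        (Nat.not_dvd_of_pos_of_lt n.succ_pos hn)
    have hcb := congrArg (Nat.cast : ℕ → ZMod p) (Nat.succ_mul_centralBinom_succ n)
    have hch : (k.choose (n + 1) : ZMod p) * (n + 1) = k.choose n * (k - n) := by
      rcases le_or_gt n k with h | h
      · rw [← Nat.cast_sub h]
        exact_mod_cast congrArg (Nat.cast : ℕ → ZMod p) (Nat.choose_succ_right_eq k n)
      · simp [Nat.choose_eq_zero_of_lt h, Nat.choose_eq_zero_of_lt (h.trans n.lt_succ_self)]
    refine mul_left_cancel₀ hn' ?_
    -- the recurrences agree because `-4 (k - n) = 2 (2n + 1)` when `2k + 1 = 0`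
    push_cast at hk0 hcb ⊢
    linear_combination hcb + 2 * (2 * n + 1) * ih (by omega) - (-4) ^ (n + 1) * hch
      + 2 * (-4) ^ n * (k.choose n : ZMod p) * hk0

theorem stmt_12_general (m p : ℕ) (hp : p.Prime) (hodd : Odd p)
    (hpm : 2 * m + 1 < p) :
    Matrix.det (Matrix.of fun i j : Fin (m + 1) =>
      ((((p - 1) / 2).choose (m + (j : ℕ) - (i : ℕ)) : ZMod p))) ≠ 0 := by
  have := Fact.mk hp
  set M := Matrix.of fun i j : Fin (m + 1) =>
    ((((p - 1) / 2).choose (m + (j : ℕ) - (i : ℕ)) : ZMod p))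
  have hk : 2 * ((p - 1) / 2) + 1 = p := by
    obtain ⟨t, rfl⟩ := hodd
    omega
  have h2 : (2 : ZMod p) ≠ 0 := by
    exact_mod_cast (ZMod.natCast_eq_zero_iff 2 p).not.mpr
      (Nat.not_dvd_of_pos_of_lt two_pos (by omega))
  have hhankel : (of fun i j : Fin (m + 1) => (Nat.centralBinom (i + j) : ZMod p)) =
      of fun i j : Fin (m + 1) =>
        (-4) ^ (i : ℕ) * ((-4) ^ (j : ℕ) * M.submatrix Fin.revPerm id i j) := by
    ext i j
    rw [of_apply, ZMod.centralBinom_eq_neg_four_pow_mul_choose hk (by omega)]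
    simp only [M, of_apply, submatrix_apply, Fin.revPerm_apply, Fin.val_rev, id_eq]
    rw [show m + j - (m + 1 - (i + 1)) = i + j by omega, pow_add, mul_assoc]
  have hdet := congrArg det hhankel
  rw [det_centralBinom_hankel, det_mul_row_mul_column, det_permute] at hdet
  intro hM
  rw [hM, mul_zero, mul_zero] at hdet
  exact pow_ne_zero m h2 hdet

theorem stmt_12 (m p : ℕ) (hm : 1 ≤ m) (hp : p.Prime) (hodd : Odd p)
    (hpm : 2 * m + 1 < p) :
    Matrix.det (Matrix.of fun i j : Fin (m + 1) =>
      ((((p - 1) / 2).choose (m + (j : ℕ) - (i : ℕ)) : ZMod p))) ≠ 0 :=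
  stmt_12_general m p hp hodd hpm
end
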